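/- For |z| < 1 and integers k₁ ≥ 1, …, k_r ≥ 1, the iterated integral ∫₀^z (dz/z)^{∘(k₁−1)} ∘ (dz/(1−z)) ∘ ⋯ ∘ (dz/z)^{∘(k_r−1)} ∘ (dz/(1−z)) equals the multiple polylogarithm series ∑_{n₁>⋯>n_r>0} z^{n₁}/(n₁^{k₁}⋯n_r^{k_r}). -/

import Mathlib

/-!
Put `Li_L(w) = ∑ₙ a_L(n) wⁿ` with `a_[](n) = δ_{n0}` and `a_{m::L}(n) = (∑_{j<n} a_L(j)) / n^{m+1}`.
Termwise differentiation on the unit disc gives `w · Li'_{(m+1)::L} = Li_{m::L}` and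
`(1 - w) · Li'_{0::L} = Li_L`, i.e. `Li` satisfies the same recursions `∫₀^t ds/s · (…)` and
`∫₀^t z ds/(1 - sz) · (…)` as the iterated integral along `s ↦ s z`; by the fundamental theorem of
calculus the iterated integral of the word of `L` up to `t` is `Li_L(t z)`. Unrolling the
recursion, `a_L(N)` is the sum of `1 / (n₁^{k₁} ⋯ n_r^{k_r})` over `N = n₁ > ⋯ > n_r > 0`, so
grouping the multiple series by its first index turns it into `Li_L(z)`.
-/

namespace MPLIterInt

/-- Chen's iterated integral of a word of one-forms on the interval:
`∫₀^t 𝟏 = 1`, `∫₀^t ω₁∘⋯∘ω_s = ∫₀^t ω₁(s')·(∫₀^{s'} ω₂∘⋯∘ω_s) ds'`. -/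
noncomputable def II : List (ℝ → ℂ) → ℝ → ℂ
  | [], _ => 1
  | (f :: fs), t => ∫ s in (0 : ℝ)..t, f s * II fs s

/-- The word of one-forms `ζ₁^{∘(k₁−1)} ∘ ζ₁₁ ∘ ⋯ ∘ ζ₁^{∘(k_r−1)} ∘ ζ₁₁`
pulled back along the straight path `s ↦ s·z` from `0` to `z`:
`ζ₁ = dz/z` pulls back to `ds/s` and `ζ₁₁ = dz/(1−z)` to `z ds/(1−sz)`. -/
noncomputable def mplWord (z : ℂ) {r : ℕ} (ks : Fin r → ℕ) : List (ℝ → ℂ) :=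
  List.flatten (List.ofFn fun t : Fin r =>
    List.replicate (ks t - 1) (fun s : ℝ => 1 / (s : ℂ)) ++
      [fun s : ℝ => z / (1 - (s : ℂ) * z)])

open Finset

section PowerSeries

variable {c : ℕ → ℂ} {C : ℝ}

lemma norm_mul_pow_le (hc : ∀ n, ‖c n‖ ≤ C) (n : ℕ) {v : ℂ} {ρ : ℝ} (hv : ‖v‖ ≤ ρ) :
    ‖c n * v ^ n‖ ≤ C * ρ ^ n := by
  rw [norm_mul, norm_pow]
  exact mul_le_mul (hc n) (pow_le_pow_left₀ (norm_nonneg v) hv n) (by positivity)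
    ((norm_nonneg _).trans (hc n))

lemma summable_mul_pow (hc : ∀ n, ‖c n‖ ≤ C) {w : ℂ} (hw : ‖w‖ < 1) :
    Summable fun n => c n * w ^ n :=
  .of_norm_bounded ((summable_geometric_of_lt_one (norm_nonneg w) hw).mul_left C)
    fun n => norm_mul_pow_le hc n le_rfl

lemma differentiableOn_tsum_mul_pow (hc : ∀ n, ‖c n‖ ≤ C) :
    DifferentiableOn ℂ (fun w => ∑' n, c n * w ^ n) (Metric.ball 0 1) := by
  intro w hw
  obtain ⟨ρ, hwρ, hρ⟩ := exists_between (mem_ball_zero_iff.mp hw)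
  have hsum := (summable_geometric_of_lt_one ((norm_nonneg w).trans hwρ.le) hρ).mul_left C
  refine ((Complex.differentiableOn_tsum_of_summable_norm hsum
    (fun n => ((differentiable_const (c n)).mul (differentiable_pow n)).differentiableOn)
    Metric.isOpen_ball fun n v hv => norm_mul_pow_le hc n (mem_ball_zero_iff.mp hv).le
    ).differentiableAt (Metric.isOpen_ball.mem_nhds (mem_ball_zero_iff.mpr hwρ))
    ).differentiableWithinAt

lemma hasSum_deriv_tsum_mul_pow (hc : ∀ n, ‖c n‖ ≤ C) {w : ℂ} (hw : ‖w‖ < 1) :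
    HasSum (fun n => c n * (n * w ^ (n - 1))) (deriv (fun w => ∑' n, c n * w ^ n) w) := by
  obtain ⟨ρ, hwρ, hρ⟩ := exists_between hw
  have hsum := (summable_geometric_of_lt_one ((norm_nonneg w).trans hwρ.le) hρ).mul_left C
  simpa using Complex.hasSum_deriv_of_summable_norm (F := fun n w => c n * w ^ n) hsum
    (fun n => ((differentiable_const (c n)).mul (differentiable_pow n)).differentiableOn)
    Metric.isOpen_ball (fun n v hv => norm_mul_pow_le hc n (mem_ball_zero_iff.mp hv).le)
    (mem_ball_zero_iff.mpr hwρ)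

end PowerSeries

/-- A list entry `m` stands for the exponent `m + 1`, i.e. for `m` forms `dz/z` before `dz/(1-z)`.
At `n = 0` the second clause is `0 / 0 = 0`. -/
noncomputable def mplCoeff : List ℕ → ℕ → ℝ
  | [], n => if n = 0 then 1 else 0
  | m :: L, n => (∑ j ∈ range n, mplCoeff L j) / n ^ (m + 1)

noncomputable def mplSeries (L : List ℕ) (w : ℂ) : ℂ :=
  ∑' n, (mplCoeff L n : ℂ) * w ^ n

@[simp]
lemma mplCoeff_cons_zero (m : ℕ) (L : List ℕ) : mplCoeff (m :: L) 0 = 0 := by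
  simp [mplCoeff]

lemma mplCoeff_nonneg : ∀ (L : List ℕ) (n : ℕ), 0 ≤ mplCoeff L n
  | [], n => by unfold mplCoeff; positivity
  | m :: L, n => div_nonneg (sum_nonneg fun j _ => mplCoeff_nonneg L j) (by positivity)

lemma mplCoeff_le_one : ∀ (L : List ℕ) (n : ℕ), mplCoeff L n ≤ 1
  | [], n => by unfold mplCoeff; split_ifs <;> norm_num
  | m :: L, 0 => by simp
  | m :: L, n + 1 => by
    rw [mplCoeff, div_le_one (by positivity)]
    calc ∑ j ∈ range (n + 1), mplCoeff L j ≤ ∑ _j ∈ range (n + 1), (1 : ℝ) :=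
          sum_le_sum fun j _ => mplCoeff_le_one L j
      _ = (n + 1 : ℕ) := by simp
      _ ≤ _ := by exact_mod_cast Nat.le_self_pow (Nat.succ_ne_zero m) _

lemma norm_mplCoeff_le_one (L : List ℕ) (n : ℕ) : ‖(mplCoeff L n : ℂ)‖ ≤ 1 := by
  rw [Complex.norm_real, Real.norm_of_nonneg (mplCoeff_nonneg L n)]
  exact mplCoeff_le_one L n

lemma natCast_mul_mplCoeff_succ (m : ℕ) (L : List ℕ) (n : ℕ) :
    (n : ℝ) * mplCoeff ((m + 1) :: L) n = mplCoeff (m :: L) n := by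
  rcases n.eq_zero_or_pos with rfl | hn
  · simp
  simp only [mplCoeff]
  field_simp
  ring

lemma natCast_mul_mplCoeff_zero (L : List ℕ) (n : ℕ) :
    (n : ℝ) * mplCoeff (0 :: L) n = ∑ j ∈ range n, mplCoeff L j := by
  rcases n.eq_zero_or_pos with rfl | hn
  · simp
  simp only [mplCoeff, zero_add, pow_one]
  field_simp

lemma hasSum_mplSeries (L : List ℕ) {w : ℂ} (hw : ‖w‖ < 1) :
    HasSum (fun n => (mplCoeff L n : ℂ) * w ^ n) (mplSeries L w) :=
  (summable_mul_pow (norm_mplCoeff_le_one L) hw).hasSum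

@[simp]
lemma mplSeries_nil (w : ℂ) : mplSeries [] w = 1 := by
  rw [mplSeries, tsum_eq_single 0 fun n hn => by simp [mplCoeff, hn]]
  simp [mplCoeff]

@[simp]
lemma mplSeries_cons_zero (m : ℕ) (L : List ℕ) : mplSeries (m :: L) 0 = 0 := by
  rw [mplSeries, tsum_eq_single 0 fun n hn => by simp [hn]]
  simp

lemma differentiableOn_mplSeries (L : List ℕ) :
    DifferentiableOn ℂ (mplSeries L) (Metric.ball 0 1) :=
  differentiableOn_tsum_mul_pow (norm_mplCoeff_le_one L)

lemma hasSum_deriv_mplSeries (L : List ℕ) {w : ℂ} (hw : ‖w‖ < 1) :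
    HasSum (fun n => (mplCoeff L n : ℂ) * (n * w ^ (n - 1))) (deriv (mplSeries L) w) :=
  hasSum_deriv_tsum_mul_pow (norm_mplCoeff_le_one L) hw

lemma mul_deriv_mplSeries_succ (m : ℕ) (L : List ℕ) {w : ℂ} (hw : ‖w‖ < 1) :
    w * deriv (mplSeries ((m + 1) :: L)) w = mplSeries (m :: L) w := by
  have hterm : (fun n : ℕ => w * ((mplCoeff ((m + 1) :: L) n : ℂ) * (n * w ^ (n - 1)))) =
      fun n => (mplCoeff (m :: L) n : ℂ) * w ^ n := by
    funext n
    rcases n with _ | n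
    · simp
    · rw [← natCast_mul_mplCoeff_succ m L]
      push_cast
      ring
  have h := (hasSum_deriv_mplSeries ((m + 1) :: L) hw).mul_left w
  rw [hterm] at h
  exact h.unique (hasSum_mplSeries _ hw)

lemma one_sub_mul_deriv_mplSeries_zero (L : List ℕ) {w : ℂ} (hw : ‖w‖ < 1) :
    (1 - w) * deriv (mplSeries (0 :: L)) w = mplSeries L w := by
  set S : ℕ → ℂ := fun n => ∑ j ∈ range n, (mplCoeff L j : ℂ)
  have hterm (n : ℕ) : (mplCoeff (0 :: L) n : ℂ) * n = S n := by
    simp only [S]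
    exact_mod_cast (mul_comm _ _).trans (natCast_mul_mplCoeff_zero L n)
  -- telescoping: `(1 - w) · ∑ S (n + 1) wⁿ = ∑ (S (n + 1) - S n) wⁿ`
  have hD : HasSum (fun n => S (n + 1) * w ^ n) (deriv (mplSeries (0 :: L)) w) := by
    have := (hasSum_nat_add_iff' 1).mpr (hasSum_deriv_mplSeries (0 :: L) hw)
    simpa [← hterm, mul_assoc] using this
  have hwD : HasSum (fun n => S n * w ^ n) (w * deriv (mplSeries (0 :: L)) w) := by
    refine (hasSum_nat_add_iff' 1).mp ?_
    simpa [S, pow_succ, mul_comm, mul_left_comm, mul_assoc] using hD.mul_left w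
  have hdiff : (fun n => S (n + 1) * w ^ n - S n * w ^ n) =
      fun n => (mplCoeff L n : ℂ) * w ^ n := by
    funext n
    simp [S, sum_range_succ, ← sub_mul]
  have h := hD.sub hwD
  rw [hdiff] at h
  rw [sub_mul, one_mul]
  exact h.unique (hasSum_mplSeries L hw)

lemma norm_ofReal_mul_lt_one {s : ℝ} (hs : s ∈ Set.Icc (0 : ℝ) 1) {z : ℂ} (hz : ‖z‖ < 1) :
    ‖(s : ℂ) * z‖ < 1 := by
  rw [norm_mul, Complex.norm_real, Real.norm_of_nonneg hs.1]
  exact (mul_le_of_le_one_left (norm_nonneg z) hs.2).trans_lt hz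

lemma hasDerivAt_mplSeries_ofReal_mul (L : List ℕ) {z : ℂ} (hz : ‖z‖ < 1) {s : ℝ}
    (hs : s ∈ Set.Icc (0 : ℝ) 1) :
    HasDerivAt (fun s : ℝ => mplSeries L (s * z)) (deriv (mplSeries L) (s * z) * z) s := by
  have hd : DifferentiableAt ℂ (mplSeries L) (s * z) :=
    (differentiableOn_mplSeries L).differentiableAt
      (Metric.isOpen_ball.mem_nhds (mem_ball_zero_iff.mpr (norm_ofReal_mul_lt_one hs hz)))
  exact (hd.hasDerivAt.comp (s : ℂ) (hasDerivAt_mul_const z)).comp_ofReal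

lemma continuousOn_deriv_mplSeries_ofReal_mul (L : List ℕ) {z : ℂ} (hz : ‖z‖ < 1) :
    ContinuousOn (fun s : ℝ => deriv (mplSeries L) (s * z) * z) (Set.Icc 0 1) := by
  refine (((differentiableOn_mplSeries L).deriv Metric.isOpen_ball).continuousOn.comp
    (by fun_prop) fun s hs => ?_).mul continuousOn_const
  exact mem_ball_zero_iff.mpr (norm_ofReal_mul_lt_one hs hz)

lemma integral_deriv_mplSeries_ofReal_mul (L : List ℕ) {z : ℂ} (hz : ‖z‖ < 1) {t : ℝ}
    (ht : t ∈ Set.Icc (0 : ℝ) 1) :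
    ∫ s in (0 : ℝ)..t, deriv (mplSeries L) (s * z) * z = mplSeries L (t * z) - mplSeries L 0 := by
  have hsub : Set.uIcc 0 t ⊆ Set.Icc 0 1 := by
    rw [Set.uIcc_of_le ht.1]
    exact Set.Icc_subset_Icc_right ht.2
  rw [intervalIntegral.integral_eq_sub_of_hasDerivAt
    (fun s hs => hasDerivAt_mplSeries_ofReal_mul L hz (hsub hs))
    ((continuousOn_deriv_mplSeries_ofReal_mul L hz).mono hsub).intervalIntegrable]
  simp

/-- Agreement is only asked on `(0, t]`, where the form `1 / s` is not evaluated at `s = 0`. -/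
lemma II_cons_eq_mplSeries {f : ℝ → ℂ} {fs : List (ℝ → ℂ)} (m : ℕ) (L : List ℕ) {z : ℂ}
    (hz : ‖z‖ < 1) {t : ℝ} (ht : t ∈ Set.Icc (0 : ℝ) 1)
    (h : ∀ s ∈ Set.Ioc 0 t, f s * II fs s = deriv (mplSeries (m :: L)) (s * z) * z) :
    II (f :: fs) t = mplSeries (m :: L) (t * z) := by
  rw [II, intervalIntegral.integral_congr_ae (g := fun s => deriv (mplSeries (m :: L)) (s * z) * z)
    (.of_forall fun s hs => h s (Set.uIoc_of_le ht.1 ▸ hs)),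
    integral_deriv_mplSeries_ofReal_mul _ hz ht, mplSeries_cons_zero, sub_zero]

noncomputable def listWord (z : ℂ) : List ℕ → List (ℝ → ℂ)
  | [] => []
  | m :: L => List.replicate m (fun s : ℝ => 1 / (s : ℂ)) ++
      (fun s : ℝ => z / (1 - (s : ℂ) * z)) :: listWord z L

lemma listWord_zero_cons (z : ℂ) (L : List ℕ) :
    listWord z (0 :: L) = (fun s : ℝ => z / (1 - (s : ℂ) * z)) :: listWord z L := rfl

lemma listWord_succ_cons (z : ℂ) (m : ℕ) (L : List ℕ) :
    listWord z ((m + 1) :: L) = (fun s : ℝ => 1 / (s : ℂ)) :: listWord z (m :: L) := rfl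

lemma II_listWord {z : ℂ} (hz : ‖z‖ < 1) :
    ∀ (L : List ℕ) {t : ℝ}, t ∈ Set.Icc (0 : ℝ) 1 → II (listWord z L) t = mplSeries L (t * z)
  | [], t, _ => by simp [listWord, II]
  | m :: L, t, ht => by
    induction m generalizing t with
    | zero =>
      rw [listWord_zero_cons]
      refine II_cons_eq_mplSeries 0 L hz ht fun s hs => ?_
      have hs1 : s ∈ Set.Icc (0 : ℝ) 1 := ⟨hs.1.le, hs.2.trans ht.2⟩
      have hsz := norm_ofReal_mul_lt_one hs1 hz
      have hne : 1 - (s : ℂ) * z ≠ 0 := sub_ne_zero.mpr fun h => by simp [← h] at hsz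
      rw [II_listWord hz L hs1, ← one_sub_mul_deriv_mplSeries_zero L hsz, ← mul_assoc,
        div_mul_cancel₀ z hne, mul_comm]
    | succ m ih =>
      rw [listWord_succ_cons]
      refine II_cons_eq_mplSeries (m + 1) L hz ht fun s hs => ?_
      have hs1 : s ∈ Set.Icc (0 : ℝ) 1 := ⟨hs.1.le, hs.2.trans ht.2⟩
      have hne : (s : ℂ) ≠ 0 := by exact_mod_cast hs.1.ne'
      rw [ih s hs1, ← mul_deriv_mplSeries_succ m L (norm_ofReal_mul_lt_one hs1 hz)]
      field_simp

lemma mplWord_eq_listWord (z : ℂ) {r : ℕ} (ms : Fin r → ℕ) :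
    mplWord z (fun t => ms t + 1) = listWord z (List.ofFn ms) := by
  induction r with
  | zero => rfl
  | succ r ih =>
    rw [List.ofFn_succ, listWord, ← ih]
    simp [mplWord, List.ofFn_succ]

open Classical in
noncomputable def decreasingTuples (r N : ℕ) : Finset (Fin r → ℕ) :=
  {n ∈ Fintype.piFinset fun _ => Ioo 0 N | StrictAnti n}

lemma mem_decreasingTuples {r N : ℕ} {n : Fin r → ℕ} :
    n ∈ decreasingTuples r N ↔ (∀ t, 0 < n t ∧ n t < N) ∧ StrictAnti n := by
  simp [decreasingTuples]

lemma decreasingTuples_zero (N : ℕ) : decreasingTuples 0 N = univ := by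
  ext n
  simp only [mem_decreasingTuples, mem_univ, iff_true]
  exact ⟨fun t => t.elim0, fun i => i.elim0⟩

lemma strictAnti_cons_iff {r a : ℕ} {g : Fin r → ℕ} :
    StrictAnti (Fin.cons a g : Fin (r + 1) → ℕ) ↔ (∀ i, g i < a) ∧ StrictAnti g :=
  Fin.liftFun_cons (· > ·)

lemma cons_mem_decreasingTuples {r N a : ℕ} {g : Fin r → ℕ} :
    (Fin.cons a g : Fin (r + 1) → ℕ) ∈ decreasingTuples (r + 1) N ↔
      a ∈ Ioo 0 N ∧ g ∈ decreasingTuples r a := by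
  simp only [mem_decreasingTuples, strictAnti_cons_iff, Fin.forall_fin_succ, Fin.cons_zero,
    Fin.cons_succ, mem_Ioo]
  constructor
  · rintro ⟨⟨ha, hg⟩, hlt, hanti⟩
    exact ⟨ha, fun i => ⟨(hg i).1, hlt i⟩, hanti⟩
  · rintro ⟨ha, hg, hanti⟩
    exact ⟨⟨ha, fun i => ⟨(hg i).1, (hg i).2.trans ha.2⟩⟩, fun i => (hg i).2, hanti⟩

lemma strictAnti_pos_cons_iff {r a : ℕ} {g : Fin r → ℕ} :
    (StrictAnti (Fin.cons a g : Fin (r + 1) → ℕ) ∧ ∀ t, 0 < (Fin.cons a g : Fin (r + 1) → ℕ) t) ↔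
      0 < a ∧ g ∈ decreasingTuples r a := by
  simp only [mem_decreasingTuples, strictAnti_cons_iff, Fin.forall_fin_succ, Fin.cons_zero,
    Fin.cons_succ]
  constructor
  · rintro ⟨⟨hlt, hanti⟩, ha, hg⟩
    exact ⟨ha, fun i => ⟨hg i, hlt i⟩, hanti⟩
  · rintro ⟨ha, hg, hanti⟩
    exact ⟨⟨fun i => (hg i).2, hanti⟩, ha, fun i => (hg i).1⟩

lemma sum_decreasingTuples_succ {M : Type*} [AddCommMonoid M] (r N : ℕ)
    (f : (Fin (r + 1) → ℕ) → M) :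
    ∑ n ∈ decreasingTuples (r + 1) N, f n =
      ∑ a ∈ Ioo 0 N, ∑ g ∈ decreasingTuples r a, f (Fin.cons a g) := by
  rw [sum_sigma']
  refine (sum_bij' (fun p _ => Fin.cons p.1 p.2) (fun n _ => ⟨n 0, Fin.tail n⟩)
    ?_ ?_ ?_ ?_ ?_).symm
  · rintro ⟨a, g⟩ h
    exact cons_mem_decreasingTuples.2 (mem_sigma.1 h)
  · intro n h
    rw [← Fin.cons_self_tail n, cons_mem_decreasingTuples] at h
    exact mem_sigma.2 h
  · intro p _
    rfl
  · intro n _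
    exact Fin.cons_self_tail n
  · intro p _
    rfl

noncomputable def tupleWeight {r : ℕ} (ms : Fin r → ℕ) (n : Fin r → ℕ) : ℝ :=
  (∏ t, (n t : ℝ) ^ (ms t + 1))⁻¹

lemma tupleWeight_cons {r : ℕ} (ms : Fin (r + 1) → ℕ) (a : ℕ) (g : Fin r → ℕ) :
    tupleWeight ms (Fin.cons a g) = ((a : ℝ) ^ (ms 0 + 1))⁻¹ * tupleWeight (Fin.tail ms) g := by
  simp [tupleWeight, Fin.prod_univ_succ, Fin.tail, mul_comm]

/-- For `N = 0` both sides vanish, the left one because `(0 : ℝ)⁻¹ = 0`. -/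
lemma sum_tupleWeight_cons : ∀ {r : ℕ} (ms : Fin (r + 1) → ℕ) (N : ℕ),
    ∑ g ∈ decreasingTuples r N, tupleWeight ms (Fin.cons N g) = mplCoeff (List.ofFn ms) N
  | 0, ms, N => by
    rw [decreasingTuples_zero, Fintype.sum_unique]
    rcases N.eq_zero_or_pos with rfl | hN
    · simp [tupleWeight]
    · simp [tupleWeight, mplCoeff, hN]
  | r + 1, ms, N => by
    simp_rw [tupleWeight_cons, ← mul_sum, sum_decreasingTuples_succ, sum_tupleWeight_cons]
    have hsub : Ioo 0 N ⊆ range N := fun a ha => mem_range.2 (mem_Ioo.1 ha).2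
    rw [sum_subset hsub fun a _ ha => ?_, List.ofFn_succ (f := ms), mplCoeff, div_eq_inv_mul]
    · rfl
    · obtain rfl : a = 0 := by simp_all
      simp [List.ofFn_succ]

def strictAntiPosEquivSigma (r : ℕ) :
    {n : Fin (r + 1) → ℕ // StrictAnti n ∧ ∀ t, 0 < n t} ≃
      Σ a : ℕ, decreasingTuples r (a + 1) where
  toFun n :=
    have h := strictAnti_pos_cons_iff.1 ((Fin.cons_self_tail n.1).symm ▸ n.2)
    ⟨n.1 0 - 1, Fin.tail n.1, Nat.sub_add_cancel h.1 ▸ h.2⟩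
  invFun p := ⟨Fin.cons (p.1 + 1) p.2, strictAnti_pos_cons_iff.2 ⟨p.1.succ_pos, p.2.2⟩⟩
  left_inv n := by
    ext t
    refine Fin.cases ?_ (fun i => rfl) t
    exact Nat.sub_add_cancel (n.2.2 0)
  right_inv p := rfl

lemma summable_pow_mul_tupleWeight_cons {r : ℕ} (ms : Fin (r + 1) → ℕ) {z : ℂ} (hz : ‖z‖ < 1) :
    Summable fun p : Σ a : ℕ, decreasingTuples r (a + 1) =>
      z ^ (p.1 + 1) * (tupleWeight ms (Fin.cons (p.1 + 1) p.2) : ℂ) := by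
  have hw (a : ℕ) (g : Fin r → ℕ) : 0 ≤ tupleWeight ms (Fin.cons a g) := by
    unfold tupleWeight; positivity
  have hfiber (a : ℕ) :
      ∑' g : decreasingTuples r (a + 1), ‖z ^ (a + 1) * (tupleWeight ms (Fin.cons (a + 1) g) : ℂ)‖ =
        mplCoeff (List.ofFn ms) (a + 1) * ‖z‖ ^ (a + 1) := by
    simp only [norm_mul, norm_pow, Complex.norm_real, Real.norm_of_nonneg (hw _ _)]
    rw [Finset.tsum_subtype (f := fun g => ‖z‖ ^ (a + 1) * tupleWeight ms (Fin.cons (a + 1) g)),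
      ← mul_sum, sum_tupleWeight_cons, mul_comm]
  refine .of_norm ((summable_sigma_of_nonneg fun _ => norm_nonneg _).2 ⟨fun _ => .of_finite, ?_⟩)
  simp_rw [hfiber]
  have hsum : Summable fun n => mplCoeff (List.ofFn ms) n * ‖z‖ ^ n :=
    .of_nonneg_of_le (fun n => mul_nonneg (mplCoeff_nonneg _ n) (by positivity))
      (fun n => mul_le_of_le_one_left (by positivity) (mplCoeff_le_one _ n))
      (summable_geometric_of_lt_one (norm_nonneg z) hz)
  exact (summable_nat_add_iff 1).2 hsum

lemma tsum_strictAnti_pos_eq_mplSeries {r : ℕ} (ms : Fin (r + 1) → ℕ) {z : ℂ} (hz : ‖z‖ < 1) :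
    ∑' n : {n : Fin (r + 1) → ℕ // StrictAnti n ∧ ∀ t, 0 < n t},
        z ^ n.1 0 / ∏ t, (n.1 t : ℂ) ^ (ms t + 1) = mplSeries (List.ofFn ms) z := by
  have hfiber (a : ℕ) :
      ∑' g : decreasingTuples r (a + 1), z ^ (a + 1) * (tupleWeight ms (Fin.cons (a + 1) g) : ℂ) =
        mplCoeff (List.ofFn ms) (a + 1) * z ^ (a + 1) := by
    rw [Finset.tsum_subtype (f := fun g => z ^ (a + 1) * (tupleWeight ms (Fin.cons (a + 1) g) : ℂ)),
      ← mul_sum, ← Complex.ofReal_sum, sum_tupleWeight_cons, mul_comm]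
  calc _ = ∑' p : Σ a : ℕ, decreasingTuples r (a + 1),
        z ^ (p.1 + 1) * (tupleWeight ms (Fin.cons (p.1 + 1) p.2) : ℂ) := by
        rw [← (strictAntiPosEquivSigma r).symm.tsum_eq]
        congr 1
        funext p
        simp only [tupleWeight, div_eq_mul_inv, Complex.ofReal_inv, Complex.ofReal_prod,
          Complex.ofReal_pow, Complex.ofReal_natCast]
        rfl
    _ = ∑' a : ℕ, (mplCoeff (List.ofFn ms) (a + 1) : ℂ) * z ^ (a + 1) := by
        rw [(summable_pow_mul_tupleWeight_cons ms hz).tsum_sigma]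
        simp_rw [hfiber]
    _ = mplSeries (List.ofFn ms) z := by
        rw [mplSeries, (hasSum_mplSeries _ hz).summable.tsum_eq_zero_add]
        simp [List.ofFn_succ]

/-- for `|z| < 1` and `k₁,…,k_r ≥ 1`, the iterated integral
`∫₀^z ζ₁^{∘(k₁−1)}∘ζ₁₁∘⋯∘ζ₁^{∘(k_r−1)}∘ζ₁₁` equals the multiple polylogarithm
`∑_{n₁>⋯>n_r>0} z^{n₁}/(n₁^{k₁}⋯n_r^{k_r})`. -/
theorem iteratedIntegral_eq_MPL (z : ℂ) (hz : ‖z‖ < 1) (r : ℕ) (hr : 0 < r)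
    (ks : Fin r → ℕ) (hks : ∀ t, 1 ≤ ks t) :
    II (mplWord z ks) 1 =
      ∑' n : {n : Fin r → ℕ // StrictAnti n ∧ ∀ t, 0 < n t},
        z ^ (n.1 ⟨0, hr⟩) / ∏ t : Fin r, ((n.1 t : ℂ)) ^ (ks t) := by
  obtain ⟨r, rfl⟩ := Nat.exists_eq_add_one_of_ne_zero hr.ne'
  obtain ⟨ms, rfl⟩ : ∃ ms : Fin (r + 1) → ℕ, ks = fun t => ms t + 1 :=
    ⟨fun t => ks t - 1, funext fun t => (Nat.sub_add_cancel (hks t)).symm⟩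
  rw [mplWord_eq_listWord, II_listWord hz _ ⟨zero_le_one, le_rfl⟩, Complex.ofReal_one, one_mul]
  exact (tsum_strictAnti_pos_eq_mplSeries ms hz).symm

end MPLIterInt
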